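/- Let P = ℤ^ℕ, S the finitely supported sequences, (bₙ) a sequence in S \ {0} with strictly increasing disjoint supports, qₙ = max supp(bₙ), and let (fᵢ)ᵢ∈ℕ be homomorphisms S → ℤ such that fᵢ(bₙ) = 0 whenever i ≤ n. Define β : P → P by β(Σ eᵢxᵢ) = Σ bᵢxᵢ. For each i, define the partial map gᵢ on those x = Σ eⱼxⱼ ∈ P for which the sequence n ↦ fᵢ(Σ_{j ≤ qₙ} eⱼxⱼ) is eventually constant, sending x to that eventual value. Then the domain of gᵢ is a pure subgroup of P containing S, gᵢ restricted to S equals fᵢ, and β(P) is contained in the domain of gᵢ. -/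
import Mathlib


/-- The subgroup `S = ℤ^(ℕ)` of finitely supported sequences in `P = ℤ^ℕ`. -/
def SG : AddSubgroup (ℕ → ℤ) where
  carrier := {x | {i | x i ≠ 0}.Finite}
  zero_mem' := by simp
  add_mem' := by
    intro a b ha hb
    refine (ha.union hb).subset ?_
    intro i hi
    by_contra h
    simp only [Set.mem_union, Set.mem_setOf_eq, not_or, not_not] at h
    simp only [Set.mem_setOf_eq, Pi.add_apply, h.1, h.2, add_zero, ne_eq,
      not_true_eq_false] at hi
  neg_mem' := by
    intro a ha
    simpa only [Set.mem_setOf_eq, Pi.neg_apply, ne_eq, neg_eq_zero] using ha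

/-- The truncation `Σ_{j ≤ m} eⱼ xⱼ` of `x ∈ P`, an element of `S`. -/
def trunc (x : ℕ → ℤ) (m : ℕ) : SG :=
  ⟨fun j => if j ≤ m then x j else 0, by
    refine (Set.finite_Iic m).subset ?_
    intro j hj
    simp only [Set.mem_setOf_eq, ne_eq, ite_eq_right_iff, not_forall] at hj
    exact hj.1⟩

open Classical in
/-- The map `β` determined by a sequence `b` of elements of `S` with pairwise disjoint
supports, sending `Σ eᵢxᵢ` to `Σ bᵢxᵢ`. -/
noncomputable def betaMap (b : ℕ → ℕ → ℤ) (x : ℕ → ℤ) : ℕ → ℤ :=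
  fun j => if h : ∃ n, b n j ≠ 0 then b h.choose j * x h.choose else 0

/-- The domain of the partial homomorphism `gᵢ`: those `x ∈ P` for which
`fᵢ(Σ_{j ≤ qₙ} eⱼxⱼ)` is eventually constant in `n`. -/
def Dom (qn : ℕ → ℕ) (f : ℕ → (SG →+ ℤ)) (i : ℕ) : Set (ℕ → ℤ) :=
  {x | ∃ N, ∀ n ≥ N, f i (trunc x (qn n)) = f i (trunc x (qn N))}

lemma trunc_add (x y : ℕ → ℤ) (m : ℕ) : trunc (x + y) m = trunc x m + trunc y m := by
  apply Subtype.ext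
  funext j
  show (if j ≤ m then (x + y) j else 0) = (if j ≤ m then x j else 0) + (if j ≤ m then y j else 0)
  split <;> simp

lemma trunc_neg (x : ℕ → ℤ) (m : ℕ) : trunc (-x) m = -(trunc x m) := by
  apply Subtype.ext
  funext j
  show (if j ≤ m then (-x) j else 0) = -(if j ≤ m then x j else 0)
  split <;> simp

lemma trunc_zero (m : ℕ) : trunc (0 : ℕ → ℤ) m = 0 := by
  apply Subtype.ext
  funext j
  show (if j ≤ m then (0:ℕ→ℤ) j else 0) = 0
  split <;> simp

lemma trunc_smul (k : ℤ) (x : ℕ → ℤ) (m : ℕ) : trunc (k • x) m = k • (trunc x m) := by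
  apply Subtype.ext
  funext j
  show (if j ≤ m then (k • x) j else 0) = k • (if j ≤ m then x j else 0)
  split <;> simp

lemma trunc_eq_of_le (x : ℕ → ℤ) (hx : x ∈ SG) (M : ℕ) (hM : ∀ j, x j ≠ 0 → j ≤ M)
    (m : ℕ) (hm : M ≤ m) : trunc x m = ⟨x, hx⟩ := by
  apply Subtype.ext
  funext j
  show (if j ≤ m then x j else 0) = x j
  split
  · rfl
  next h =>
    by_contra hc
    exact h (le_trans (hM j (fun h0 => hc h0.symm)) hm)

/-- Let `(bₙ)` be nonzero elements of `S` with increasing disjoint supports,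
`qₙ = max supp(bₙ)`, and `fᵢ : S → ℤ` homomorphisms with `fᵢ(bₙ) = 0` for `i ≤ n`.
Then: on `S` the eventual value of `fᵢ` on truncations is `fᵢ` itself (so
`S ⊆ dom gᵢ` and `gᵢ ↾ S = fᵢ`); each `dom gᵢ` is a pure subgroup of `P`; and
`β(P) ⊆ dom gᵢ` for each `i`. -/
theorem stmt16 (b : ℕ → ℕ → ℤ) (hbS : ∀ n, b n ∈ SG)
    (hne : ∀ n, b n ≠ 0)
    (hincr : ∀ m n, m < n → ∀ i j, b m i ≠ 0 → b n j ≠ 0 → i < j)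
    (qn : ℕ → ℕ) (hq1 : ∀ n, b n (qn n) ≠ 0) (hq2 : ∀ n j, b n j ≠ 0 → j ≤ qn n)
    (f : ℕ → (SG →+ ℤ)) (hf : ∀ i n, i ≤ n → f i ⟨b n, hbS n⟩ = 0) :
    (∀ (i : ℕ) (x : ℕ → ℤ) (hx : x ∈ SG),
        ∃ N, ∀ n ≥ N, f i (trunc x (qn n)) = f i ⟨x, hx⟩) ∧
    (∀ i, (SG : Set (ℕ → ℤ)) ⊆ Dom qn f i) ∧
    (∀ i, ∃ A : AddSubgroup (ℕ → ℤ), (A : Set (ℕ → ℤ)) = Dom qn f i) ∧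
    (∀ (i : ℕ) (x : ℕ → ℤ) (k : ℤ), k ≠ 0 → k • x ∈ Dom qn f i → x ∈ Dom qn f i) ∧
    (∀ (i : ℕ) (x : ℕ → ℤ), betaMap b x ∈ Dom qn f i) := by
  have hqmono : StrictMono qn := fun m n hmn => hincr m n hmn (qn m) (qn n) (hq1 m) (hq1 n)
  have hqge : ∀ n, n ≤ qn n := fun n => hqmono.le_apply
  have part1 : ∀ (i : ℕ) (x : ℕ → ℤ) (hx : x ∈ SG),
      ∃ N, ∀ n ≥ N, f i (trunc x (qn n)) = f i ⟨x, hx⟩ := by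
    intro i x hx
    obtain ⟨M, hM⟩ := Set.Finite.bddAbove hx
    refine ⟨M, fun n hn => ?_⟩
    rw [trunc_eq_of_le x hx M (fun j hj => hM hj) (qn n) (le_trans hn (hqge n))]
  have part2 : ∀ i, (SG : Set (ℕ → ℤ)) ⊆ Dom qn f i := by
    intro i x hx
    obtain ⟨N, hN⟩ := part1 i x hx
    exact ⟨N, fun n hn => by rw [hN n hn, hN N le_rfl]⟩
  have part3 : ∀ i, ∃ A : AddSubgroup (ℕ → ℤ), (A : Set (ℕ → ℤ)) = Dom qn f i := by
    intro i
    refine ⟨{ carrier := Dom qn f i, zero_mem' := ?_, add_mem' := ?_, neg_mem' := ?_ }, rfl⟩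
    · intro a c ha hc
      obtain ⟨Na, hNa⟩ := ha
      obtain ⟨Nc, hNc⟩ := hc
      refine ⟨max Na Nc, fun n hn => ?_⟩
      rw [trunc_add, trunc_add, map_add, map_add,
        hNa n (le_trans (le_max_left _ _) hn), hNc n (le_trans (le_max_right _ _) hn),
        hNa (max Na Nc) (le_max_left _ _), hNc (max Na Nc) (le_max_right _ _)]
    · exact ⟨0, fun n hn => by rw [trunc_zero, trunc_zero]⟩
    · intro a ha
      obtain ⟨Na, hNa⟩ := ha
      exact ⟨Na, fun n hn => by rw [trunc_neg, trunc_neg, map_neg, map_neg, hNa n hn]⟩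
  have part4 : ∀ (i : ℕ) (x : ℕ → ℤ) (k : ℤ), k ≠ 0 → k • x ∈ Dom qn f i → x ∈ Dom qn f i := by
    rintro i x k hk ⟨N, hN⟩
    refine ⟨N, fun n hn => ?_⟩
    have h1 := hN n hn
    rw [trunc_smul, trunc_smul, map_zsmul, map_zsmul, smul_eq_mul, smul_eq_mul] at h1
    exact mul_left_cancel₀ hk h1
  have hdisj : ∀ m m' j, m ≠ m' → b m j ≠ 0 → b m' j = 0 := by
    intro m m' j hne' hm
    by_contra hm'
    rcases lt_or_gt_of_ne hne' with h | h
    · exact lt_irrefl j (hincr m m' h j j hm hm')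
    · exact lt_irrefl j (hincr m' m h j j hm' hm)
  have hbeta : ∀ (x : ℕ → ℤ) (n : ℕ), trunc (betaMap b x) (qn n)
      = ∑ m ∈ Finset.range (n+1), x m • (⟨b m, hbS m⟩ : SG) := by
    intro x n
    apply Subtype.ext
    funext j
    have hrhs : ((∑ m ∈ Finset.range (n+1), x m • (⟨b m, hbS m⟩ : SG) : SG) : ℕ → ℤ) j
        = ∑ m ∈ Finset.range (n+1), x m * b m j := by
      have h1 := map_sum ((Pi.evalAddMonoidHom (fun _ => ℤ) j).comp SG.subtype)
        (fun m => x m • (⟨b m, hbS m⟩ : SG)) (Finset.range (n+1))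
      simp only [AddMonoidHom.comp_apply, AddSubgroup.coe_subtype, Pi.evalAddMonoidHom_apply]
        at h1
      rw [h1]
      apply Finset.sum_congr rfl
      intro m _
      simp [smul_eq_mul]
    rw [hrhs]
    show (if j ≤ qn n then betaMap b x j else 0) = _
    by_cases hj : j ≤ qn n
    · rw [if_pos hj]
      simp only [betaMap]
      by_cases hE : ∃ m, b m j ≠ 0
      · rw [dif_pos hE]
        have hm₀ := hE.choose_spec
        have hm₀n : hE.choose ≤ n := by
          by_contra h
          exact absurd hj (not_le.2 (hincr n hE.choose (not_le.1 h) (qn n) j (hq1 n) hm₀))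
        rw [Finset.sum_eq_single hE.choose]
        · ring
        · intro m _ hne'
          rw [hdisj hE.choose m j (fun h => hne' h.symm) hm₀, mul_zero]
        · intro h
          exact absurd (Finset.mem_range.2 (Nat.lt_succ_of_le hm₀n)) h
      · rw [dif_neg hE]
        push_neg at hE
        symm
        apply Finset.sum_eq_zero
        intro m _
        rw [hE m, mul_zero]
    · rw [if_neg hj]
      symm
      apply Finset.sum_eq_zero
      intro m hm
      have hbm : b m j = 0 := by
        by_contra hbm
        exact hj (le_trans (hq2 m j hbm)
          (hqmono.monotone (Nat.lt_succ_iff.1 (Finset.mem_range.1 hm))))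
      rw [hbm, mul_zero]
  have part5 : ∀ (i : ℕ) (x : ℕ → ℤ), betaMap b x ∈ Dom qn f i := by
    intro i x
    have key : ∀ n, f i (trunc (betaMap b x) (qn n))
        = ∑ m ∈ Finset.range (n+1), x m * f i ⟨b m, hbS m⟩ := by
      intro n
      rw [hbeta, map_sum]
      apply Finset.sum_congr rfl
      intro m _
      rw [map_zsmul, smul_eq_mul]
    refine ⟨i, fun n hn => ?_⟩
    rw [key, key]
    refine (Finset.sum_subset (Finset.range_subset_range.2 (Nat.succ_le_succ hn)) ?_).symm
    intro m _ hm'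
    have him : i ≤ m := Nat.le_of_succ_le (not_lt.1 (fun h => hm' (Finset.mem_range.2 h)))
    rw [hf i m him, mul_zero]
  exact ⟨part1, part2, part3, part4, part5⟩
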